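/- arXiv:1310.3779 — 3 statements merged into one kernel-verified Lean document; each statement's English description precedes it below -/
import Mathlib

section
/- Let (X, λ) be a finite measure space and let (u_n) be a sequence of integrable functions u_n : X → ℝ with sup_n ∫_X |u_n| dλ < +∞, and let u : X → ℝ be integrable. Set f_n(z, ξ) = 1_{u_n(z) > ξ} and f(z, ξ) = 1_{u(z) > ξ}. Assume that f_n → f in the weak-* topology of L^∞(X × ℝ), i.e. for every g ∈ L^1(X × ℝ), ∫_X ∫_ℝ f_n(z,ξ) g(z,ξ) dξ dλ(z) → ∫_X ∫_ℝ f(z,ξ) g(z,ξ) dξ dλ(z). Assume moreover the equi-integrability condition: sup_n ∫_X (u_n − k)^+ dλ → 0 and sup_n ∫_X (u_n + k)^− dλ → 0 as k → +∞. Then u_n → u strongly in L^1(X). -/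
/-!
Write `T_k s = max (min s k) (-k)` for the truncation at level `k`. Since
`∫ 1_{s > ξ} 1_{|ξ| < k} dξ = T_k s + k`, testing the weak-* convergence against `1_{|ξ| < k}`
and against `1_{u(z) > ξ} 1_{|ξ| < k}` (note `1_{s > ξ} 1_{t > ξ} = 1_{min s t > ξ}`) gives
`∫ T_k u_n → ∫ T_k u` and `∫ T_k (min u_n u) → ∫ T_k u`. As `T_k` is monotone,
`|T_k a - T_k b| = T_k a + T_k b - 2 T_k (min a b)`, so `T_k u_n → T_k u` in `L¹` for every `k`.
Equi-integrability makes `‖u_n - T_k u_n‖₁` small uniformly in `n`, which upgrades this to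
`u_n → u` in `L¹`.
-/

open MeasureTheory Filter Topology Set

noncomputable def truncation (k s : ℝ) : ℝ := max (min s k) (-k)

section Truncation

variable {k : ℝ}

lemma monotone_truncation (k : ℝ) : Monotone (truncation k) :=
  fun _ _ h => max_le_max (min_le_min_right k h) le_rfl

lemma continuous_truncation (k : ℝ) : Continuous (truncation k) := by
  unfold truncation; fun_prop

lemma abs_truncation_le (k s : ℝ) : |truncation k s| ≤ |k| := by
  rw [truncation, abs_le]
  constructor
  · exact (neg_le_neg (le_abs_self k)).trans (le_max_right _ _)
  · exact max_le ((min_le_right _ _).trans (le_abs_self k)) (neg_le_abs k)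

lemma truncation_of_abs_le {s : ℝ} (h : |s| ≤ k) : truncation k s = s := by
  rw [abs_le] at h
  rw [truncation, min_eq_left h.2, max_eq_left h.1]

lemma abs_sub_truncation (hk : 0 ≤ k) (s : ℝ) :
    |s - truncation k s| = max (s - k) 0 + max (-(s + k)) 0 := by
  rw [truncation, abs_eq_max_neg]
  simp only [max_def, min_def]
  split_ifs <;> linarith

lemma abs_sub_truncation_le_abs (hk : 0 ≤ k) (s : ℝ) : |s - truncation k s| ≤ |s| := by
  rw [abs_sub_truncation hk, abs_eq_max_neg]
  simp only [max_def]
  split_ifs <;> linarith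

lemma abs_sub_le_truncation (k a b : ℝ) :
    |a - b| ≤ |a - truncation k a| + |truncation k a - truncation k b| + |b - truncation k b| := by
  rw [abs_sub_comm b]
  exact (abs_sub_le _ (truncation k b) _).trans (add_le_add_left (abs_sub_le _ _ _) _)

lemma abs_truncation_sub_truncation (k a b : ℝ) :
    |truncation k a - truncation k b|
      = (truncation k a + k) + (truncation k b + k) - 2 * (truncation k (min a b) + k) := by
  rw [(monotone_truncation k).map_min, abs_sub_comm, ← max_sub_min_eq_abs]
  linarith [min_add_max (truncation k a) (truncation k b)]

lemma ite_gt_mul_ite_gt (s t ξ : ℝ) :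
    (if s > ξ then (1 : ℝ) else 0) * (if t > ξ then 1 else 0) = if min s t > ξ then 1 else 0 := by
  by_cases hs : s > ξ <;> by_cases ht : t > ξ <;> simp [hs, ht]

lemma integral_ite_gt_mul_indicator_Ioo (k s : ℝ) :
    ∫ ξ : ℝ, (if s > ξ then (1 : ℝ) else 0) * (Ioo (-k) k).indicator (1 : ℝ → ℝ) ξ
      = truncation k s + k := by
  have h : (fun ξ : ℝ => (if s > ξ then (1 : ℝ) else 0) * (Ioo (-k) k).indicator (1 : ℝ → ℝ) ξ)
      = (Ioo (-k) (min s k)).indicator 1 := by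
    ext ξ
    rw [← Iio_inter_Ioo, ← indicator_indicator, indicator_apply (Iio s)]
    simp [gt_iff_lt]
  rw [h, integral_indicator_one measurableSet_Ioo, Real.volume_real_Ioo, truncation,
    sub_neg_eq_add, ← max_add_add_right, neg_add_cancel]

end Truncation

section TruncationIntegral

variable {X : Type*} [MeasurableSpace X] {μ : Measure X} [IsFiniteMeasure μ] {k : ℝ}

lemma integrable_truncation_comp {f : X → ℝ} (hf : AEMeasurable f μ) (k : ℝ) :
    Integrable (fun z => truncation k (f z)) μ :=
  .of_bound ((continuous_truncation k).measurable.comp_aemeasurable hf).aestronglyMeasurable |k|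
    (ae_of_all _ fun _ => abs_truncation_le k _)

lemma MeasureTheory.Integrable.sub_truncation {f : X → ℝ} (hf : Integrable f μ) (k : ℝ) :
    Integrable (fun z => f z - truncation k (f z)) μ :=
  hf.sub (integrable_truncation_comp hf.aemeasurable k)

lemma integral_abs_sub_truncation {f : X → ℝ} (hf : Integrable f μ) (hk : 0 ≤ k) :
    ∫ z, |f z - truncation k (f z)| ∂μ
      = (∫ z, max (f z - k) 0 ∂μ) + ∫ z, max (-(f z + k)) 0 ∂μ := by
  simp only [abs_sub_truncation hk]
  exact integral_add (hf.sub (integrable_const k)).pos_part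
    (hf.add (integrable_const k)).neg.pos_part

lemma tendsto_integral_abs_sub_truncation {f : X → ℝ} (hf : Integrable f μ) :
    Tendsto (fun k => ∫ z, |f z - truncation k (f z)| ∂μ) atTop (𝓝 0) := by
  have hlim : ∀ z, Tendsto (fun k => |f z - truncation k (f z)|) atTop (𝓝 0) := fun z =>
    tendsto_const_nhds.congr' <| (eventually_ge_atTop |f z|).mono fun k hk => by
      simp [truncation_of_abs_le hk]
  simpa using tendsto_integral_filter_of_dominated_convergence (fun z => |f z|)
    (Eventually.of_forall fun k => (hf.sub_truncation k).abs.aestronglyMeasurable)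
    ((eventually_ge_atTop 0).mono fun k hk => ae_of_all _ fun z => by
      simpa only [Real.norm_eq_abs, abs_abs] using abs_sub_truncation_le_abs hk (f z))
    hf.abs (ae_of_all _ hlim)

lemma integral_abs_sub_le_truncation {f g : X → ℝ} (hf : Integrable f μ) (hg : Integrable g μ)
    (k : ℝ) :
    ∫ z, |f z - g z| ∂μ ≤ (∫ z, |f z - truncation k (f z)| ∂μ)
      + (∫ z, |truncation k (f z) - truncation k (g z)| ∂μ)
      + ∫ z, |g z - truncation k (g z)| ∂μ := by
  have hT : Integrable (fun z => |truncation k (f z) - truncation k (g z)|) μ :=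
    ((integrable_truncation_comp hf.aemeasurable k).sub
      (integrable_truncation_comp hg.aemeasurable k)).abs
  have hfT : Integrable
      (fun z => |f z - truncation k (f z)| + |truncation k (f z) - truncation k (g z)|) μ :=
    (hf.sub_truncation k).abs.add hT
  rw [← integral_add (hf.sub_truncation k).abs hT, ← integral_add hfT (hg.sub_truncation k).abs]
  exact integral_mono (hf.sub hg).abs (hfT.add (hg.sub_truncation k).abs)
    fun z => abs_sub_le_truncation k (f z) (g z)

lemma integral_abs_truncation_sub_truncation {f g : X → ℝ} (hf : AEMeasurable f μ)
    (hg : AEMeasurable g μ) (k : ℝ) :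
    ∫ z, |truncation k (f z) - truncation k (g z)| ∂μ
      = (∫ z, (truncation k (f z) + k) ∂μ) + (∫ z, (truncation k (g z) + k) ∂μ)
        - 2 * ∫ z, (truncation k (min (f z) (g z)) + k) ∂μ := by
  have hint : ∀ {h : X → ℝ}, AEMeasurable h μ → Integrable (fun z => truncation k (h z) + k) μ :=
    fun hh => (integrable_truncation_comp hh k).add (integrable_const k)
  simp only [abs_truncation_sub_truncation]
  rw [integral_sub, integral_add (hint hf) (hint hg), integral_const_mul]
  exacts [(hint hf).add (hint hg), (hint (hf.min hg)).const_mul 2]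

theorem tendsto_integral_abs_sub_of_truncation {v : ℕ → X → ℝ} {w : X → ℝ}
    (hv : ∀ j, Integrable (v j) μ) (hw : Integrable w μ)
    (htail : ∀ ε > 0, ∃ k, (∀ j, ∫ z, |v j z - truncation k (v j z)| ∂μ ≤ ε) ∧
      ∫ z, |w z - truncation k (w z)| ∂μ ≤ ε)
    (htrunc : ∀ k, Tendsto (fun j => ∫ z, |truncation k (v j z) - truncation k (w z)| ∂μ)
      atTop (𝓝 0)) :
    Tendsto (fun j => ∫ z, |v j z - w z| ∂μ) atTop (𝓝 0) := by
  refine NormedAddGroup.tendsto_nhds_zero.2 fun ε hε => ?_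
  obtain ⟨k, hvk, hwk⟩ := htail (ε / 3) (by positivity)
  filter_upwards [(htrunc k).eventually (gt_mem_nhds (show (0 : ℝ) < ε / 3 by positivity))]
    with j hj
  rw [Real.norm_of_nonneg (integral_nonneg fun z => abs_nonneg _)]
  linarith [integral_abs_sub_le_truncation (hv j) hw k, hvk j]

end TruncationIntegral

section KineticPairing

variable {X : Type*} [MeasurableSpace X] {μ : Measure X}

/-- `∫∫ f g` for the equilibrium kinetic function `f(z, ξ) = 1_{v(z) > ξ}`. -/
noncomputable def kineticPairing (μ : Measure X) (v : X → ℝ) (g : X × ℝ → ℝ) : ℝ :=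
  ∫ z, (∫ ξ : ℝ, (if v z > ξ then (1 : ℝ) else 0) * g (z, ξ)) ∂μ

lemma kineticPairing_indicator_Ioo (k : ℝ) (v : X → ℝ) :
    kineticPairing μ v (fun p => (Ioo (-k) k).indicator (1 : ℝ → ℝ) p.2)
      = ∫ z, (truncation k (v z) + k) ∂μ := by
  simp only [kineticPairing, integral_ite_gt_mul_indicator_Ioo]

lemma kineticPairing_ite_gt_mul_indicator_Ioo (k : ℝ) (v w : X → ℝ) :
    kineticPairing μ v
        (fun p => (if w p.1 > p.2 then 1 else 0) * (Ioo (-k) k).indicator (1 : ℝ → ℝ) p.2)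
      = ∫ z, (truncation k (min (v z) (w z)) + k) ∂μ := by
  simp only [kineticPairing, ← mul_assoc, ite_gt_mul_ite_gt, integral_ite_gt_mul_indicator_Ioo]

variable [IsFiniteMeasure μ]

lemma integrable_indicator_Ioo_snd (k : ℝ) :
    Integrable (fun p : X × ℝ => (Ioo (-k) k).indicator (1 : ℝ → ℝ) p.2) (μ.prod volume) := by
  have h : Integrable ((Ioo (-k) k).indicator (1 : ℝ → ℝ)) volume :=
    (integrableOn_const measure_Ioo_lt_top.ne).integrable_indicator measurableSet_Ioo
  simpa only [one_mul] using (integrable_const (1 : ℝ)).mul_prod (μ := μ) h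

lemma integrable_ite_gt_mul_indicator_Ioo {w : X → ℝ} (hw : Measurable w) (k : ℝ) :
    Integrable
      (fun p : X × ℝ => (if w p.1 > p.2 then 1 else 0) * (Ioo (-k) k).indicator (1 : ℝ → ℝ) p.2)
      (μ.prod volume) := by
  refine (integrable_indicator_Ioo_snd k).bdd_mul (c := 1) ?_ (ae_of_all _ fun p => ?_)
  · exact (Measurable.ite (measurableSet_lt measurable_snd (hw.comp measurable_fst))
      measurable_const measurable_const).aestronglyMeasurable
  · split_ifs <;> simp

theorem tendsto_integral_abs_truncation_sub_of_kineticPairing {v : ℕ → X → ℝ} {w : X → ℝ}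
    (hv : ∀ j, AEMeasurable (v j) μ) (hw : AEMeasurable w μ)
    (hweak : ∀ g : X × ℝ → ℝ, Integrable g (μ.prod volume) →
      Tendsto (fun j => kineticPairing μ (v j) g) atTop (𝓝 (kineticPairing μ w g)))
    (k : ℝ) :
    Tendsto (fun j => ∫ z, |truncation k (v j z) - truncation k (w z)| ∂μ) atTop (𝓝 0) := by
  have hmk : ∀ f : X → ℝ, ∫ z, (truncation k (min (f z) (hw.mk w z)) + k) ∂μ
      = ∫ z, (truncation k (min (f z) (w z)) + k) ∂μ := fun f =>
    integral_congr_ae (hw.ae_eq_mk.mono fun z hz => by simp only [hz])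
  have hmass := hweak _ (integrable_indicator_Ioo_snd k)
  have hbelow := hweak _ (integrable_ite_gt_mul_indicator_Ioo hw.measurable_mk k)
  simp only [kineticPairing_indicator_Ioo, kineticPairing_ite_gt_mul_indicator_Ioo, hmk,
    min_self] at hmass hbelow
  simp only [integral_abs_truncation_sub_truncation (hv _) hw]
  have hlim := (hmass.add (tendsto_const_nhds (x := ∫ z, (truncation k (w z) + k) ∂μ))).sub
    (hbelow.const_mul 2)
  rwa [← two_mul, sub_self] at hlim

end KineticPairing

theorem kinetic_weak_to_strong_L1_general {X : Type*} [MeasurableSpace X]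
    (lam : Measure X) [IsFiniteMeasure lam]
    (uN : ℕ → X → ℝ) (u : X → ℝ)
    (huN : ∀ j, Integrable (uN j) lam) (hu : Integrable u lam)
    (hweak : ∀ g : X × ℝ → ℝ, Integrable g (lam.prod volume) →
      Tendsto
        (fun j => ∫ z, (∫ ξ : ℝ, (if uN j z > ξ then (1 : ℝ) else 0) * g (z, ξ)) ∂lam)
        atTop
        (𝓝 (∫ z, (∫ ξ : ℝ, (if u z > ξ then (1 : ℝ) else 0) * g (z, ξ)) ∂lam)))
    (hequi : ∀ ε : ℝ, 0 < ε → ∃ k₀ : ℝ, ∀ k : ℝ, k₀ ≤ k → ∀ j,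
      (∫ z, max (uN j z - k) 0 ∂lam) ≤ ε ∧ (∫ z, max (-(uN j z + k)) 0 ∂lam) ≤ ε) :
    Tendsto (fun j => ∫ z, |uN j z - u z| ∂lam) atTop (𝓝 0) := by
  refine tendsto_integral_abs_sub_of_truncation huN hu (fun ε hε => ?_)
    (tendsto_integral_abs_truncation_sub_of_kineticPairing (fun j => (huN j).aemeasurable)
      hu.aemeasurable hweak)
  obtain ⟨k₀, hk₀⟩ := hequi (ε / 2) (half_pos hε)
  obtain ⟨k, hk₀k, hk, hu_tail⟩ := ((eventually_ge_atTop k₀).and ((eventually_ge_atTop 0).and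
    ((tendsto_integral_abs_sub_truncation hu).eventually (ge_mem_nhds hε)))).exists
  refine ⟨k, fun j => ?_, hu_tail⟩
  rw [integral_abs_sub_truncation (huN j) hk]
  linarith [hk₀ k hk₀k j]

/-- Weak-* convergence of equilibrium kinetic functions
`f_n(z,ξ) = 1_{u_n(z)>ξ}` to the equilibrium `f(z,ξ) = 1_{u(z)>ξ}`, together with
equi-integrability of `(u_n)`, implies strong `L¹` convergence `u_n → u`. -/
theorem kinetic_weak_to_strong_L1 {X : Type*} [MeasurableSpace X]
    (lam : Measure X) [IsFiniteMeasure lam]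
    (uN : ℕ → X → ℝ) (u : X → ℝ)
    (huN : ∀ j, Integrable (uN j) lam) (hu : Integrable u lam)
    (hbound : ∃ C : ℝ, ∀ j, (∫ z, |uN j z| ∂lam) ≤ C)
    (hweak : ∀ g : X × ℝ → ℝ, Integrable g (lam.prod volume) →
      Tendsto
        (fun j => ∫ z, (∫ ξ : ℝ, (if uN j z > ξ then (1 : ℝ) else 0) * g (z, ξ)) ∂lam)
        atTop
        (𝓝 (∫ z, (∫ ξ : ℝ, (if u z > ξ then (1 : ℝ) else 0) * g (z, ξ)) ∂lam)))
    (hequi : ∀ ε : ℝ, 0 < ε → ∃ k₀ : ℝ, ∀ k : ℝ, k₀ ≤ k → ∀ j,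
      (∫ z, max (uN j z - k) 0 ∂lam) ≤ ε ∧ (∫ z, max (-(uN j z + k)) 0 ∂lam) ≤ ε) :
    Tendsto (fun j => ∫ z, |uN j z - u z| ∂lam) atTop (𝓝 0) :=
  kinetic_weak_to_strong_L1_general lam uN u huN hu hweak hequi
end

section
/- Let (X, λ) be a finite measure space, R > 0, and let (u_n) be a sequence of measurable functions u_n : X → ℝ with |u_n| ≤ R λ-a.e. for all n, and u : X → ℝ measurable with |u| ≤ R λ-a.e. Assume that for every g ∈ L^1(X × ℝ), ∫_X ∫_ℝ 1_{u_n(z) > ξ} g(z,ξ) dξ dλ(z) → ∫_X ∫_ℝ 1_{u(z) > ξ} g(z,ξ) dξ dλ(z). Then u_n → u strongly in L^2(X); in particular u_n ⇀ u weakly in L^2(X) and ‖u_n‖_{L^2(X)} → ‖u‖_{L^2(X)}. -/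
open MeasureTheory Filter Topology

/-!
Test the kinetic functions against `g_w(z, ξ) = 1_{w(z) > ξ} 1_{(-R, R)}(ξ)`: since
`∫_{-R}^{R} 1_{a > ξ} 1_{b > ξ} dξ = min(a, b) + R` for `a, b ∈ [-R, R]`, the hypothesis gives
`∫ min(uₙ, w) → ∫ min(u, w)`. With `w ≡ R` and `w = u` this yields `∫ uₙ → ∫ u` and
`∫ min(uₙ, u) → ∫ u`, hence `∫ |uₙ - u| = ∫ uₙ + ∫ u - 2 ∫ min(uₙ, u) → 0`. The uniform bound
`|uₙ - u| ≤ 2R` upgrades this to `L²`; Cauchy–Schwarz gives the weak convergence, and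
`uₙ² = (uₙ - u)² + 2 uₙ u - u²` the convergence of the norms.
-/

open Set

lemma integral_ite_lt_mul_indicator_Ioo {a c d : ℝ} (hca : c ≤ a) (had : a ≤ d) :
    ∫ ξ : ℝ, (if a > ξ then (1 : ℝ) else 0) * (Ioo c d).indicator 1 ξ = a - c := by
  have h : (fun ξ : ℝ => (if a > ξ then (1 : ℝ) else 0) * (Ioo c d).indicator 1 ξ)
      = (Ioo c a).indicator 1 := by
    ext ξ
    simp only [indicator_apply, mem_Ioo, Pi.one_apply, gt_iff_lt]
    split_ifs <;> grind
  rw [h, integral_indicator_one measurableSet_Ioo, measureReal_def, Real.volume_Ioo,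
    ENNReal.toReal_ofReal (sub_nonneg.2 hca)]

lemma ite_lt_mul_ite_lt (a b ξ : ℝ) :
    (if a > ξ then (1 : ℝ) else 0) * (if b > ξ then 1 else 0) = if min a b > ξ then 1 else 0 := by
  by_cases ha : a > ξ <;> by_cases hb : b > ξ <;> simp [ha, hb]

section Kinetic

variable {X : Type*} [MeasurableSpace X] {μ : Measure X} [IsFiniteMeasure μ]

noncomputable def kineticTest (w : X → ℝ) (c d : ℝ) (p : X × ℝ) : ℝ :=
  (if w p.1 > p.2 then 1 else 0) * (Ioo c d).indicator 1 p.2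

lemma integrable_kineticTest {w : X → ℝ} (hw : Measurable w) (c d : ℝ) :
    Integrable (kineticTest w c d) (μ.prod volume) := by
  have h_ind :
      Integrable (fun p : X × ℝ => (Ioo c d).indicator (1 : ℝ → ℝ) p.2) (μ.prod volume) :=
    ((integrable_indicator_iff measurableSet_Ioo).2
      (integrableOn_const (by simp [Real.volume_Ioo]))).comp_snd μ
  have h_meas : Measurable (kineticTest w c d) :=
    (Measurable.ite (measurableSet_lt measurable_snd (hw.comp measurable_fst)) measurable_const
      measurable_const).mul ((measurable_const.indicator measurableSet_Ioo).comp measurable_snd)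
  refine h_ind.mono' h_meas.aestronglyMeasurable (ae_of_all _ fun p => ?_)
  simp only [kineticTest, indicator_apply]
  split_ifs <;> simp

lemma integral_kinetic_mul_kineticTest {v w : X → ℝ} {c d : ℝ} (hv : AEMeasurable v μ)
    (hw : Measurable w) (hvb : ∀ᵐ z ∂μ, v z ∈ Icc c d) (hwb : ∀ᵐ z ∂μ, c ≤ w z) :
    ∫ z, (∫ ξ : ℝ, (if v z > ξ then (1 : ℝ) else 0) * kineticTest w c d (z, ξ)) ∂μ
      = ∫ z, min (v z) (w z) ∂μ - μ.real univ * c := by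
  have h_min : ∀ᵐ z ∂μ, min (v z) (w z) ∈ Icc c d := by
    filter_upwards [hvb, hwb] with z hvz hwz
    exact ⟨le_min hvz.1 hwz, (min_le_left _ _).trans hvz.2⟩
  have h_int : Integrable (fun z => min (v z) (w z)) μ :=
    .of_mem_Icc c d (hv.min hw.aemeasurable) h_min
  rw [← smul_eq_mul, ← integral_const, ← integral_sub h_int (integrable_const c)]
  refine integral_congr_ae ?_
  filter_upwards [h_min] with z hz
  simp only [kineticTest, ← mul_assoc, ite_lt_mul_ite_lt]
  exact integral_ite_lt_mul_indicator_Ioo hz.1 hz.2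

variable {ι : Type*} {l : Filter ι} {vN : ι → X → ℝ} {v : X → ℝ} {c d : ℝ}

variable (μ) in
/-- `1_{vN n > ξ} → 1_{v > ξ}` along `l`, weakly-* in `L^∞(X × ℝ)` (tested against `L¹`). -/
def KineticTendsto (vN : ι → X → ℝ) (l : Filter ι) (v : X → ℝ) : Prop :=
  ∀ g : X × ℝ → ℝ, Integrable g (μ.prod volume) →
    Tendsto (fun n => ∫ z, (∫ ξ : ℝ, (if vN n z > ξ then (1 : ℝ) else 0) * g (z, ξ)) ∂μ) l
      (𝓝 (∫ z, (∫ ξ : ℝ, (if v z > ξ then (1 : ℝ) else 0) * g (z, ξ)) ∂μ))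

theorem tendsto_integral_min_of_tendsto_kinetic
    (hvN : ∀ n, AEMeasurable (vN n) μ) (hv : AEMeasurable v μ)
    (hvNb : ∀ n, ∀ᵐ z ∂μ, vN n z ∈ Icc c d) (hvb : ∀ᵐ z ∂μ, v z ∈ Icc c d)
    (hkin : KineticTendsto μ vN l v)
    {w : X → ℝ} (hw : Measurable w) (hwb : ∀ᵐ z ∂μ, c ≤ w z) :
    Tendsto (fun n => ∫ z, min (vN n z) (w z) ∂μ) l (𝓝 (∫ z, min (v z) (w z) ∂μ)) := by
  have h := hkin _ (integrable_kineticTest hw c d)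
  simp only [integral_kinetic_mul_kineticTest (hvN _) hw (hvNb _) hwb,
    integral_kinetic_mul_kineticTest hv hw hvb hwb] at h
  exact (tendsto_sub_const_iff _).1 h

theorem tendsto_integral_of_tendsto_kinetic (hcd : c ≤ d)
    (hvN : ∀ n, AEMeasurable (vN n) μ) (hv : AEMeasurable v μ)
    (hvNb : ∀ n, ∀ᵐ z ∂μ, vN n z ∈ Icc c d) (hvb : ∀ᵐ z ∂μ, v z ∈ Icc c d)
    (hkin : KineticTendsto μ vN l v) :
    Tendsto (fun n => ∫ z, vN n z ∂μ) l (𝓝 (∫ z, v z ∂μ)) := by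
  have h_min_eq : ∀ f : X → ℝ, (∀ᵐ z ∂μ, f z ∈ Icc c d) → ∫ z, min (f z) d ∂μ = ∫ z, f z ∂μ :=
    fun f hf => integral_congr_ae (hf.mono fun _ h => min_eq_left h.2)
  have h := tendsto_integral_min_of_tendsto_kinetic hvN hv hvNb hvb hkin measurable_const
    (ae_of_all _ fun _ => hcd)
  rw [h_min_eq v hvb] at h
  exact h.congr fun n => h_min_eq _ (hvNb n)

end Kinetic

section Convergence

variable {X : Type*} [MeasurableSpace X] {μ : Measure X} {ι : Type*} {l : Filter ι}
  {f : ι → X → ℝ} {g : X → ℝ}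

theorem tendsto_integral_abs_sub_of_tendsto_integral_min (hf : ∀ n, Integrable (f n) μ)
    (hg : Integrable g μ) (h_int : Tendsto (fun n => ∫ x, f n x ∂μ) l (𝓝 (∫ x, g x ∂μ)))
    (h_min : Tendsto (fun n => ∫ x, min (f n x) (g x) ∂μ) l (𝓝 (∫ x, g x ∂μ))) :
    Tendsto (fun n => ∫ x, |f n x - g x| ∂μ) l (𝓝 0) := by
  have h_eq : ∀ n, ∫ x, |f n x - g x| ∂μ
      = ∫ x, f n x ∂μ + ∫ x, g x ∂μ - 2 * ∫ x, min (f n x) (g x) ∂μ := by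
    intro n
    have h_add : Integrable (fun x => f n x + g x) μ := (hf n).add hg
    have h_min : Integrable (fun x => 2 * min (f n x) (g x)) μ := ((hf n).inf hg).const_mul 2
    rw [← integral_add (hf n) hg, ← integral_const_mul, ← integral_sub h_add h_min]
    refine integral_congr_ae (ae_of_all _ fun x => ?_)
    have h_sum := min_add_max (f n x) (g x)
    have h_abs := max_sub_min_eq_abs' (f n x) (g x)
    dsimp only
    linarith
  have h := (h_int.add_const (∫ x, g x ∂μ)).sub (h_min.const_mul 2)
  rw [show ∫ x, g x ∂μ + ∫ x, g x ∂μ - 2 * ∫ x, g x ∂μ = 0 by ring] at h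
  exact h.congr fun n => (h_eq n).symm

theorem tendsto_integral_abs_sq_of_tendsto_integral_abs {C : ℝ} (hf : ∀ n, Integrable (f n) μ)
    (hb : ∀ n, ∀ᵐ x ∂μ, |f n x| ≤ C) (h1 : Tendsto (fun n => ∫ x, |f n x| ∂μ) l (𝓝 0)) :
    Tendsto (fun n => ∫ x, |f n x| ^ 2 ∂μ) l (𝓝 0) := by
  refine squeeze_zero (fun n => integral_nonneg fun x => by positivity) (fun n => ?_)
    (by simpa using h1.const_mul C)
  rw [← integral_const_mul]
  refine integral_mono_of_nonneg (ae_of_all _ fun x => by positivity)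
    ((hf n).abs.const_mul C) ?_
  filter_upwards [hb n] with x hx
  rw [sq]
  exact mul_le_mul_of_nonneg_right hx (abs_nonneg _)

theorem abs_integral_mul_le_sqrt_mul_sqrt {φ : X → ℝ} (hg : MemLp g 2 μ) (hφ : MemLp φ 2 μ) :
    |∫ x, g x * φ x ∂μ| ≤ √(∫ x, |g x| ^ 2 ∂μ) * √(∫ x, |φ x| ^ 2 ∂μ) := by
  have h := integral_mul_le_Lp_mul_Lq_of_nonneg Real.HolderConjugate.two_two
    (ae_of_all _ fun x => abs_nonneg (g x)) (ae_of_all _ fun x => abs_nonneg (φ x))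
    (by rw [ENNReal.ofReal_ofNat]; exact hg.abs) (by rw [ENNReal.ofReal_ofNat]; exact hφ.abs)
  calc |∫ x, g x * φ x ∂μ| ≤ ∫ x, |g x * φ x| ∂μ := abs_integral_le_integral_abs
    _ = ∫ x, |g x| * |φ x| ∂μ := by simp only [abs_mul]
    _ ≤ _ := by simpa only [Real.sqrt_eq_rpow, Real.rpow_two] using h

theorem tendsto_integral_mul_of_tendsto_integral_abs_sub_sq {φ : X → ℝ}
    (hf : ∀ n, MemLp (f n) 2 μ) (hg : MemLp g 2 μ) (hφ : MemLp φ 2 μ)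
    (h2 : Tendsto (fun n => ∫ x, |f n x - g x| ^ 2 ∂μ) l (𝓝 0)) :
    Tendsto (fun n => ∫ x, f n x * φ x ∂μ) l (𝓝 (∫ x, g x * φ x ∂μ)) := by
  rw [tendsto_iff_dist_tendsto_zero]
  refine squeeze_zero (fun n => dist_nonneg) (fun n => ?_)
    (g := fun n => √(∫ x, |f n x - g x| ^ 2 ∂μ) * √(∫ x, |φ x| ^ 2 ∂μ)) ?_
  · have hfφ : Integrable (fun x => f n x * φ x) μ := (hf n).integrable_mul hφ
    have hgφ : Integrable (fun x => g x * φ x) μ := hg.integrable_mul hφ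
    rw [Real.dist_eq, ← integral_sub hfφ hgφ]
    have h_sub : MemLp (fun x => f n x - g x) 2 μ := (hf n).sub hg
    simpa only [sub_mul] using abs_integral_mul_le_sqrt_mul_sqrt h_sub hφ
  · simpa using h2.sqrt.mul_const _

theorem tendsto_integral_sq_of_tendsto_integral_abs_sub_sq
    (hf : ∀ n, MemLp (f n) 2 μ) (hg : MemLp g 2 μ)
    (h2 : Tendsto (fun n => ∫ x, |f n x - g x| ^ 2 ∂μ) l (𝓝 0)) :
    Tendsto (fun n => ∫ x, f n x ^ 2 ∂μ) l (𝓝 (∫ x, g x ^ 2 ∂μ)) := by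
  have h_eq : ∀ n, ∫ x, f n x ^ 2 ∂μ
      = ∫ x, |f n x - g x| ^ 2 ∂μ + 2 * ∫ x, f n x * g x ∂μ - ∫ x, g x ^ 2 ∂μ := by
    intro n
    have h_sub : MemLp (fun x => f n x - g x) 2 μ := (hf n).sub hg
    have h_sq : Integrable (fun x => |f n x - g x| ^ 2) μ := by
      simpa only [sq_abs] using h_sub.integrable_sq
    have h_mul : Integrable (fun x => 2 * (f n x * g x)) μ :=
      ((hf n).integrable_mul hg).const_mul 2
    have h_sum : Integrable (fun x => |f n x - g x| ^ 2 + 2 * (f n x * g x)) μ := h_sq.add h_mul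
    rw [← integral_const_mul, ← integral_add h_sq h_mul, ← integral_sub h_sum hg.integrable_sq]
    exact integral_congr_ae (ae_of_all _ fun x => by simp only [sq_abs]; ring)
  have h := (h2.add ((tendsto_integral_mul_of_tendsto_integral_abs_sub_sq hf hg hg h2).const_mul
    2)).sub_const (∫ x, g x ^ 2 ∂μ)
  simp only [← sq] at h
  rw [show 0 + 2 * ∫ x, g x ^ 2 ∂μ - ∫ x, g x ^ 2 ∂μ = ∫ x, g x ^ 2 ∂μ by ring] at h
  exact h.congr fun n => (h_eq n).symm

end Convergence

/-- For uniformly bounded `u_n`, `u`, weak-* convergence of the equilibrium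
kinetic functions `1_{u_n>ξ} → 1_{u>ξ}` implies strong `L²` convergence `u_n → u`; in
particular `u_n ⇀ u` weakly in `L²` and the `L²` norms converge. -/
theorem kinetic_weak_to_strong_L2_bounded {X : Type*} [MeasurableSpace X]
    (lam : Measure X) [IsFiniteMeasure lam]
    (R : ℝ) (hR : 0 < R) (uN : ℕ → X → ℝ) (u : X → ℝ)
    (huNm : ∀ j, Measurable (uN j)) (hum : Measurable u)
    (huNb : ∀ j, ∀ᵐ z ∂lam, |uN j z| ≤ R) (hub : ∀ᵐ z ∂lam, |u z| ≤ R)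
    (hweak : ∀ g : X × ℝ → ℝ, Integrable g (lam.prod volume) →
      Tendsto
        (fun j => ∫ z, (∫ ξ : ℝ, (if uN j z > ξ then (1 : ℝ) else 0) * g (z, ξ)) ∂lam)
        atTop
        (𝓝 (∫ z, (∫ ξ : ℝ, (if u z > ξ then (1 : ℝ) else 0) * g (z, ξ)) ∂lam))) :
    Tendsto (fun j => ∫ z, |uN j z - u z| ^ 2 ∂lam) atTop (𝓝 0) ∧
    (∀ φ : X → ℝ, MemLp φ 2 lam →
      Tendsto (fun j => ∫ z, uN j z * φ z ∂lam) atTop (𝓝 (∫ z, u z * φ z ∂lam))) ∧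
    Tendsto (fun j => ∫ z, (uN j z) ^ 2 ∂lam) atTop (𝓝 (∫ z, (u z) ^ 2 ∂lam)) := by
  have huN_ae j : AEMeasurable (uN j) lam := (huNm j).aemeasurable
  have huN_Icc j : ∀ᵐ z ∂lam, uN j z ∈ Icc (-R) R := (huNb j).mono fun _ => abs_le.mp
  have hu_Icc : ∀ᵐ z ∂lam, u z ∈ Icc (-R) R := hub.mono fun _ => abs_le.mp
  have hmemN j p : MemLp (uN j) p lam :=
    .of_bound (huNm j).aestronglyMeasurable R (by simpa using huNb j)
  have hmem p : MemLp u p lam := .of_bound hum.aestronglyMeasurable R (by simpa using hub)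
  have h_int := tendsto_integral_of_tendsto_kinetic (by linarith) huN_ae hum.aemeasurable
    huN_Icc hu_Icc hweak
  have h_min : Tendsto (fun j => ∫ z, min (uN j z) (u z) ∂lam) atTop (𝓝 (∫ z, u z ∂lam)) := by
    simpa using tendsto_integral_min_of_tendsto_kinetic huN_ae hum.aemeasurable huN_Icc hu_Icc
      hweak hum (hu_Icc.mono fun _ h => h.1)
  have h_L1 := tendsto_integral_abs_sub_of_tendsto_integral_min
    (fun j => (hmemN j 1).integrable le_rfl) ((hmem 1).integrable le_rfl) h_int h_min
  have h_bound j : ∀ᵐ z ∂lam, |uN j z - u z| ≤ 2 * R := by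
    filter_upwards [huNb j, hub] with z hz hz'
    linarith [abs_sub (uN j z) (u z)]
  have h_L2 := tendsto_integral_abs_sq_of_tendsto_integral_abs
    (fun j => ((hmemN j 1).sub (hmem 1)).integrable le_rfl) h_bound h_L1
  exact ⟨h_L2, fun φ hφ => tendsto_integral_mul_of_tendsto_integral_abs_sub_sq
    (fun j => hmemN j 2) (hmem 2) hφ h_L2,
    tendsto_integral_sq_of_tendsto_integral_abs_sub_sq (fun j => hmemN j 2) (hmem 2) h_L2⟩
end

section
/- Let b ∈ (0,1] and let η satisfy 0 < η ≤ (b+4) / (2(1+b)). Then sup over α ∈ [0, 1/2] of min((1/2 − α) b, α, 4α − 2 + η) equals η b / (b+4), and the supremum is attained at α = 1/2 − η/(b+4). -/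
/-!
The first term `(1/2 - α) b` decreases and the third term `4α - 2 + η` increases in `α`;
they cross at `α* = 1/2 - η/(b+4)` with common value `ηb/(b+4)`, so the minimum of the two,
and a fortiori of all three, never exceeds that value. At `α*` the middle term `α*` is at least
`ηb/(b+4)` exactly when `2η(1+b) ≤ b+4`, so there the minimum equals `ηb/(b+4)`.
-/

open Set

theorem min_le_max_of_antitone_of_monotone {α β : Type*} [LinearOrder α] [LinearOrder β]
    {f g : α → β} (hf : Antitone f) (hg : Monotone g) (a x : α) :
    min (f x) (g x) ≤ max (f a) (g a) := by
  rcases le_total a x with hax | hxa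
  · exact (min_le_left _ _).trans ((hf hax).trans (le_max_left _ _))
  · exact (min_le_right _ _).trans ((hg hxa).trans (le_max_right _ _))

section OptimalIndex

variable {b η : ℝ}

theorem optimal_index_mem_Icc (hb : 0 ≤ b) (hη : 0 < η) (hη' : η ≤ (b + 4) / (2 * (1 + b))) :
    1 / 2 - η / (b + 4) ∈ Icc (0 : ℝ) (1 / 2) := by
  have hb4 : 0 < b + 4 := by linarith
  have hηb : η * (2 * (1 + b)) ≤ b + 4 := (le_div_iff₀ (by linarith)).mp hη'
  have hη_half : η / (b + 4) ≤ 1 / 2 := by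
    rw [div_le_div_iff₀ hb4 two_pos]
    nlinarith
  exact ⟨by linarith, by linarith [div_pos hη hb4]⟩

theorem first_term_at_optimal_index :
    (1 / 2 - (1 / 2 - η / (b + 4))) * b = η * b / (b + 4) := by
  ring

theorem third_term_at_optimal_index (hb : b + 4 ≠ 0) :
    4 * (1 / 2 - η / (b + 4)) - 2 + η = η * b / (b + 4) := by
  field_simp
  ring

theorem value_le_optimal_index (hb : 0 ≤ b) (hη' : η ≤ (b + 4) / (2 * (1 + b))) :
    η * b / (b + 4) ≤ 1 / 2 - η / (b + 4) := by
  have hb4 : 0 < b + 4 := by linarith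
  have hηb : η * (2 * (1 + b)) ≤ b + 4 := (le_div_iff₀ (by linarith)).mp hη'
  rw [le_sub_iff_add_le, ← add_div, div_le_iff₀ hb4]
  linarith

theorem min_at_optimal_index (hb : 0 ≤ b) (hη' : η ≤ (b + 4) / (2 * (1 + b))) :
    min ((1 / 2 - (1 / 2 - η / (b + 4))) * b)
        (min (1 / 2 - η / (b + 4)) (4 * (1 / 2 - η / (b + 4)) - 2 + η)) =
      η * b / (b + 4) := by
  have hb4 : b + 4 ≠ 0 := by linarith
  rw [first_term_at_optimal_index, third_term_at_optimal_index hb4,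
    min_eq_right (value_le_optimal_index hb hη'), min_self]

end OptimalIndex

/-- For `b ∈ (0,1]` and `0 < η ≤ (b+4)/(2(1+b))`, the supremum over
`α ∈ [0,1/2]` of `min((1/2-α)b, α, 4α - 2 + η)` equals `ηb/(b+4)` and is attained at
`α = 1/2 - η/(b+4)`. -/
theorem sup_min_indices_dim_ge_two (b η : ℝ) (hb : b ∈ Set.Ioc (0 : ℝ) 1)
    (hη : 0 < η) (hη' : η ≤ (b + 4) / (2 * (1 + b))) :
    IsGreatest
      ((fun α => min ((1 / 2 - α) * b) (min α (4 * α - 2 + η))) '' Set.Icc (0 : ℝ) (1 / 2))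
      (η * b / (b + 4)) ∧
    1 / 2 - η / (b + 4) ∈ Set.Icc (0 : ℝ) (1 / 2) ∧
    min ((1 / 2 - (1 / 2 - η / (b + 4))) * b)
        (min (1 / 2 - η / (b + 4)) (4 * (1 / 2 - η / (b + 4)) - 2 + η)) =
      η * b / (b + 4) := by
  have hb0 : 0 ≤ b := hb.1.le
  have hmem := optimal_index_mem_Icc hb0 hη hη'
  have hval := min_at_optimal_index hb0 hη'
  refine ⟨⟨⟨_, hmem, hval⟩, ?_⟩, hmem, hval⟩
  rintro _ ⟨α, -, rfl⟩
  have hcross := min_le_max_of_antitone_of_monotone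
    (f := fun α : ℝ => (1 / 2 - α) * b) (g := fun α : ℝ => 4 * α - 2 + η)
    (fun _ _ h => by dsimp only; nlinarith) (fun _ _ h => by dsimp only; linarith)
    (1 / 2 - η / (b + 4)) α
  have hb4 : b + 4 ≠ 0 := by linarith
  rw [first_term_at_optimal_index, third_term_at_optimal_index hb4, max_self] at hcross
  exact (min_le_min_left _ (min_le_right _ _)).trans hcross
end
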